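/- arXiv:1701.02180 — 2 statements merged into one kernel-verified Lean document; each statement's English description precedes it below -/
import Mathlib

section
/- Let A be a unital C*-algebra in which every element admits a unitary polar decomposition, i.e., for every x ∈ A there exists a unitary u ∈ A with x = u · √(x*x), where √ denotes the continuous-functional-calculus square root of the positive element x*x. Then the invertible elements of A are dense in A (A has stable rank one). -/
/-!
Write `x = u |x|`. The positive element `|x|` is the limit of the strictly positive, hence
invertible, elements `|x| + ε` as `ε → 0⁺`, and left multiplication by the unitary `u` is
continuous and preserves invertibility, so `x` lies in the closure of the invertibles.
-/

open Filter Topology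

lemma IsUnit.mul_mem_closure_setOf_isUnit {M : Type*} [Monoid M] [TopologicalSpace M]
    [ContinuousMul M] {u a : M} (hu : IsUnit u) (ha : a ∈ closure {x : M | IsUnit x}) :
    u * a ∈ closure {x : M | IsUnit x} :=
  map_mem_closure (continuous_const_mul u) ha fun _ hx => hu.mul hx

lemma mem_closure_setOf_isUnit_of_nonneg {A : Type*} [CStarAlgebra A] [PartialOrder A]
    [StarOrderedRing A] {a : A} (ha : 0 ≤ a) : a ∈ closure {x : A | IsUnit x} := by
  have hlim : Tendsto (fun ε : ℝ => a + algebraMap ℝ A ε) (𝓝[>] 0) (𝓝 a) := by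
    simpa using (tendsto_const_nhds.add ((continuous_algebraMap ℝ A).tendsto 0)).mono_left
      nhdsWithin_le_nhds
  refine mem_closure_of_tendsto hlim ?_
  filter_upwards [self_mem_nhdsWithin] with ε hε
  exact ((isStrictlyPositive_algebraMap hε).nonneg_add ha).isUnit

/-- If every element of a unital C*-algebra `A` admits a unitary polar decomposition
`x = u * √(x*x)` (with `√` the continuous-functional-calculus square root of `x*x`),
then the invertible elements are dense in `A` (stable rank one). -/
theorem dense_isUnit_of_unitary_polar_decomposition {A : Type*} [CStarAlgebra A]
    (h : ∀ x : A, ∃ u ∈ unitary A, x = u * cfc Real.sqrt (star x * x)) :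
    Dense {x : A | IsUnit x} := by
  let _ := CStarAlgebra.spectralOrder A
  have _ := CStarAlgebra.spectralOrderedRing A
  intro x
  obtain ⟨u, hu, hx⟩ := h x
  rw [hx]
  exact (Unitary.isUnit_coe (U := ⟨u, hu⟩)).mul_mem_closure_setOf_isUnit
    (mem_closure_setOf_isUnit_of_nonneg (cfc_nonneg fun t _ => Real.sqrt_nonneg t))
end

section
/- Let A and B be unital C*-algebras and π : A → B a surjective unital *-homomorphism. If u is a unitary element of B that is joined to the unit 1 by a continuous path inside the unitary group of B, then there exists a unitary v ∈ A such that π(v) = u. -/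
/-!
A unitary in the path component of `1` is a finite product of exponentials `exp (i h)` with `h`
selfadjoint (`Unitary.mem_pathComponentOne_iff`). Each `h` lifts to a selfadjoint `a` (take the
real part of any preimage), and then `exp (i a)` is a unitary lift of `exp (i h)`, because a
continuous *-homomorphism commutes with `exp`. Products of lifts are lifts.
-/

open Complex NormedSpace selfAdjoint
open scoped ComplexStarModule CStarAlgebra

lemma IsSelfAdjoint.exists_isSelfAdjoint_map_eq {A B F : Type*} [AddCommGroup A] [Module ℂ A]
    [StarAddMonoid A] [StarModule ℂ A] [AddCommGroup B] [Module ℂ B] [StarAddMonoid B]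
    [StarModule ℂ B] [FunLike F A B] [LinearMapClass F ℂ A B] [StarHomClass F A B] (f : F)
    (hf : Function.Surjective f) {b : B} (hb : IsSelfAdjoint b) :
    ∃ a : A, IsSelfAdjoint a ∧ f a = b := by
  obtain ⟨a, rfl⟩ := hf b
  refine ⟨ℜ a, (ℜ a).2, ?_⟩
  rw [← hb.coe_realPart]
  simp only [realPart_apply_coe, ← Complex.coe_smul, map_smul, map_add, map_star]

section

variable {A B : Type*} [CStarAlgebra A] [CStarAlgebra B]

lemma StarAlgHom.map_expUnitary (π : A →⋆ₐ[ℂ] B) (a : selfAdjoint A) :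
    Unitary.map (StarMonoidHom.ofClass π) (expUnitary a) = expUnitary ⟨π a, a.2.map π⟩ := by
  let +nondep : NormedAlgebra ℚ A := .restrictScalars ℚ ℂ A
  let +nondep : NormedAlgebra ℚ B := .restrictScalars ℚ ℂ B
  ext
  simp [map_exp π (map_continuous π)]

lemma expUnitary_mem_mrange_unitaryMap (π : A →⋆ₐ[ℂ] B) (hπ : Function.Surjective π)
    (x : selfAdjoint B) :
    expUnitary x ∈ MonoidHom.mrange (Unitary.map (StarMonoidHom.ofClass π)) := by
  obtain ⟨a, ha, hax⟩ := x.2.exists_isSelfAdjoint_map_eq π hπ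
  exact ⟨expUnitary ⟨a, ha⟩, by
    rw [π.map_expUnitary]; exact congrArg expUnitary (Subtype.ext hax)⟩

end

/-- If `π : A → B` is a surjective unital *-homomorphism between unital C*-algebras and
`u` is a unitary of `B` joined to `1` by a continuous path inside the unitary group of `B`,
then `u` lifts to a unitary of `A`. -/
theorem unitary_lifts_along_surjection {A B : Type*} [CStarAlgebra A] [CStarAlgebra B]
    (π : A →⋆ₐ[ℂ] B) (hsurj : Function.Surjective π)
    (u : B) (hu : u ∈ unitary B) (hpath : JoinedIn ((unitary B : Set B)) 1 u) :
    ∃ v ∈ unitary A, π v = u := by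
  obtain ⟨l, hl⟩ := Unitary.mem_pathComponentOne_iff.mp
    (hpath.joined_subtype : Joined (1 : unitary B) ⟨u, hu⟩)
  obtain ⟨v, hv⟩ :
      (⟨u, hu⟩ : unitary B) ∈ MonoidHom.mrange (Unitary.map (StarMonoidHom.ofClass π)) :=
    hl ▸ list_prod_mem
      (List.forall_mem_map.mpr fun x _ ↦ expUnitary_mem_mrange_unitaryMap π hsurj x)
  exact ⟨v, v.2, congrArg Subtype.val hv⟩
end
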